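/- Let AF = (A, R) be a Dung argumentation framework and Γ_AF = A ∪ { a ↣ b : (a,b) ∈ R }. If S ⊆ A is a stable extension of AF (i.e., S = A \ Defeated(S), where Defeated(S) = { a : ∃ b ∈ S, (b,a) ∈ R }), and I is the total HT-interpretation with V⁺ = A and V⁻ = Defeated(S) at both worlds, then I is an equilibrium model of Γ_AF. -/

import Mathlib

inductive Formula (Atom : Type) : Type
  | bot : Formula Atom
  | atom : Atom → Formula Atom
  | sneg : Formula Atom → Formula Atom
  | conj : Formula Atom → Formula Atom → Formula Atom
  | disj : Formula Atom → Formula Atom → Formula Atom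
  | impl : Formula Atom → Formula Atom → Formula Atom

structure NelsonInterp (Atom : Type) where
  W : Type
  le : W → W → Prop
  refl : ∀ w, le w w
  trans : ∀ {w₁ w₂ w₃}, le w₁ w₂ → le w₂ w₃ → le w₁ w₃
  Vp : W → Set Atom
  Vm : W → Set Atom
  monoP : ∀ {w w'}, le w w' → Vp w ⊆ Vp w'
  monoM : ∀ {w w'}, le w w' → Vm w ⊆ Vm w'

mutual
  def forceP {Atom : Type} (I : NelsonInterp Atom) (w : I.W) : Formula Atom → Prop
    | .bot => False
    | .atom a => a ∈ I.Vp w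
    | .sneg φ => forceM I w φ
    | .conj φ ψ => forceP I w φ ∧ forceP I w ψ
    | .disj φ ψ => forceP I w φ ∨ forceP I w ψ
    | .impl φ ψ => ∀ w', I.le w w' → (¬ forceP I w' φ ∨ forceP I w' ψ)
  def forceM {Atom : Type} (I : NelsonInterp Atom) (w : I.W) : Formula Atom → Prop
    | .bot => True
    | .atom a => a ∈ I.Vm w
    | .sneg φ => forceP I w φ
    | .conj φ ψ => forceM I w φ ∨ forceM I w ψ
    | .disj φ ψ => forceM I w φ ∧ forceM I w ψ
    | .impl φ ψ => forceP I w φ ∧ forceM I w ψ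
end

def Formula.neg {Atom : Type} (φ : Formula Atom) : Formula Atom := φ.impl .bot

def Formula.supImp {Atom : Type} (φ ψ : Formula Atom) : Formula Atom :=
  ((φ.sneg.neg).conj φ).impl ψ

def Formula.attack {Atom : Type} (φ ψ : Formula Atom) : Formula Atom :=
  φ.supImp ψ.sneg

/-- cw-inference at a world: `I,w ⊨ φ` iff `I,w ⊩⁺ ¬~φ ∧ φ`. -/
def cw {Atom : Type} (I : NelsonInterp Atom) (w : I.W) (φ : Formula Atom) : Prop :=
  forceP I w ((φ.sneg.neg).conj φ)

/-- `I ⊩⁺ φ` : forcing at all worlds. -/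
def forcedP {Atom : Type} (I : NelsonInterp Atom) (φ : Formula Atom) : Prop :=
  ∀ w, forceP I w φ

def forcedM {Atom : Type} (I : NelsonInterp Atom) (φ : Formula Atom) : Prop :=
  ∀ w, forceM I w φ

/-- `I ⊨ φ` : cw-inference at all worlds. -/
def cwAll {Atom : Type} (I : NelsonInterp Atom) (φ : Formula Atom) : Prop :=
  ∀ w, cw I w φ

def NelsonInterp.Consistent {Atom : Type} (I : NelsonInterp Atom) : Prop :=
  ∀ w, I.Vp w ∩ I.Vm w = ∅

/-- An HT-interpretation: two worlds h ≤ t, given by four sets of atoms. -/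
structure HTInterp (Atom : Type) where
  Hp : Set Atom
  Hm : Set Atom
  Tp : Set Atom
  Tm : Set Atom
  subP : Hp ⊆ Tp
  subM : Hm ⊆ Tm

/-- The underlying Nelson interpretation: world `false` is h, world `true` is t. -/
def HTInterp.toNelson {Atom : Type} (I : HTInterp Atom) : NelsonInterp Atom where
  W := Bool
  le := (· ≤ ·)
  refl := le_refl
  trans := le_trans
  Vp := fun w => if w then I.Tp else I.Hp
  Vm := fun w => if w then I.Tm else I.Hm
  monoP := by
    intro w w' hle
    match w, w', hle with
    | false, false, _ => exact subset_rfl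
    | false, true, _ => exact I.subP
    | true, true, _ => exact subset_rfl
    | true, false, h => exact absurd h (by decide)
  monoM := by
    intro w w' hle
    match w, w', hle with
    | false, false, _ => exact subset_rfl
    | false, true, _ => exact I.subM
    | true, true, _ => exact subset_rfl
    | true, false, h => exact absurd h (by decide)


def isHTModel {Atom : Type} (I : HTInterp Atom) (Γ : Set (Formula Atom)) : Prop :=
  ∀ φ ∈ Γ, ∀ w : Bool, forceP I.toNelson w φ

/-- The arguments consistently accepted by `I` among the arguments `A`. -/
def SI {Atom : Type} (I : HTInterp Atom) (A : Set Atom) : Set Atom :=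
  { a ∈ A | cwAll I.toNelson (Formula.atom a) }

/-- `I` is total and a ≤-minimal HT-model among models with the same `t`-valuations. -/
def Equilibrium {Atom : Type} (I : HTInterp Atom) (Γ : Set (Formula Atom)) : Prop :=
  I.Hp = I.Tp ∧ I.Hm = I.Tm ∧ isHTModel I Γ ∧
    ∀ J : HTInterp Atom, J.Tp = I.Tp → J.Tm = I.Tm → isHTModel J Γ →
      J.Hp = I.Tp ∧ J.Hm = I.Tm

/-- Translation of the Dung framework `(A, R)`. -/
def ThAF {Atom : Type} (A : Set Atom) (R : Atom → Atom → Prop) : Set (Formula Atom) :=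
  (Formula.atom '' A) ∪
    { f | ∃ a b, R a b ∧ f = (Formula.atom a).attack (Formula.atom b) }

def Defeated {Atom : Type} (R : Atom → Atom → Prop) (S : Set Atom) : Set Atom :=
  { a | ∃ b ∈ S, R b a }

/-!
An HT-interpretation is a model of `ThAF A R` exactly when `A ⊆ H⁺` and, at each world `w`, every
attack `a ↣ b` with `a ∈ w⁺` and `a ∉ T⁻` puts `b` into `w⁻`. In the total interpretation
`(A, Defeated S)` these attackers are the members of the stable extension `S`, whose targets are
defeated by definition. A model `J` with the same `t`-world has `A ⊆ J.H⁺` and `J.T⁻ = Defeated S`,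
so each `a ∈ S` is such an attacker at `h`, forcing `Defeated S ⊆ J.H⁻`.
-/

section HTInterp

variable {Atom : Type} (I : HTInterp Atom)

lemma HTInterp.forall_forceP_atom_iff (a : Atom) :
    (∀ w, forceP I.toNelson w (.atom a)) ↔ a ∈ I.Hp :=
  ⟨fun h => h false, fun h w => by cases w <;> simp [forceP, HTInterp.toNelson, h, I.subP h]⟩

lemma HTInterp.forall_forceP_attack_iff (a b : Atom) :
    (∀ w, forceP I.toNelson w ((Formula.atom a).attack (.atom b))) ↔
      (a ∈ I.Hp → a ∉ I.Tm → b ∈ I.Hm) ∧ (a ∈ I.Tp → a ∉ I.Tm → b ∈ I.Tm) := by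
  simp only [toNelson, Formula.attack, Formula.supImp, Formula.neg, forceP, forceM, or_false,
    Bool.forall_bool, Bool.false_eq_true, ↓reduceIte, Bool.le_true, forall_const, not_and, and_imp,
    Std.le_refl, isEmpty_Prop, not_le, Bool.false_lt_true, IsEmpty.forall_iff, true_and,
    and_self_right]
  -- `¬~a` is forced at `h` iff `a ∉ T⁻`, since `H⁻ ⊆ T⁻`
  have := @I.subM a
  tauto

lemma HTInterp.isHTModel_ThAF_iff (A : Set Atom) (R : Atom → Atom → Prop) :
    isHTModel I (ThAF A R) ↔ A ⊆ I.Hp ∧ ∀ a b, R a b →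
      (a ∈ I.Hp → a ∉ I.Tm → b ∈ I.Hm) ∧ (a ∈ I.Tp → a ∉ I.Tm → b ∈ I.Tm) := by
  constructor
  · intro h
    exact ⟨fun a ha => (I.forall_forceP_atom_iff a).1 (h _ (.inl ⟨a, ha, rfl⟩)),
      fun a b hab => (I.forall_forceP_attack_iff a b).1 (h _ (.inr ⟨a, b, hab, rfl⟩))⟩
  · rintro ⟨hA, hAttack⟩ φ (⟨a, ha, rfl⟩ | ⟨a, b, hab, rfl⟩)
    · exact (I.forall_forceP_atom_iff a).2 (hA ha)
    · exact (I.forall_forceP_attack_iff a b).2 (hAttack a b hab)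

end HTInterp

theorem af_stable_to_equilibrium {Atom : Type} (A : Set Atom)
    (R : Atom → Atom → Prop) (hR : ∀ a b, R a b → a ∈ A ∧ b ∈ A)
    (S : Set Atom) (hS : S = A \ Defeated R S) :
    Equilibrium
      ⟨A, Defeated R S, A, Defeated R S, subset_rfl, subset_rfl⟩
      (ThAF A R) := by
  set D := Defeated R S
  have mem_S_iff : ∀ {a}, a ∈ S ↔ a ∈ A ∧ a ∉ D := fun {_} => by rw [hS]; rfl
  refine ⟨rfl, rfl, (HTInterp.isHTModel_ThAF_iff _ A R).2 ⟨subset_rfl, fun a b hab => ?_⟩, ?_⟩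
  · have h : a ∈ A → a ∉ D → b ∈ D := fun ha hd => ⟨a, mem_S_iff.2 ⟨ha, hd⟩, hab⟩
    exact ⟨h, h⟩
  · intro J (hTp : J.Tp = A) (hTm : J.Tm = D) hJ
    obtain ⟨hA, hattack⟩ := (J.isHTModel_ThAF_iff A R).1 hJ
    refine ⟨(hTp ▸ J.subP).antisymm hA, (hTm ▸ J.subM).antisymm ?_⟩
    rintro b ⟨a, haS, hab⟩
    obtain ⟨ha, hd⟩ := mem_S_iff.1 haS
    exact (hattack a b hab).1 (hA ha) (hTm ▸ hd)
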